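/- arXiv:1905.12466 — 3 statements merged into one kernel-verified Lean document; each statement's English description precedes it below -/
import Mathlib

section
/- In the absence of ties among the sample, the supremum distance between the empirical copula ℂₙ and the rank-based empirical copula C̃ₙ is at most d/n. -/
open Set Finset

open scoped Classical in
/-- The marginal empirical distribution function `𝔽_{nj}`. -/
noncomputable def empMarg (n d : ℕ) (X : Fin n → Fin d → ℝ) (j : Fin d) (x : ℝ) : ℝ :=
  (1 / n) * ∑ i : Fin n, if X i j ≤ x then (1 : ℝ) else 0

/-- The generalized inverse `𝔽_{nj}⁻(u) = inf {t : 𝔽_{nj}(t) ≥ u}`, with the infimum taken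
in the extended reals (so `𝔽_{nj}⁻(0) = -∞`). -/
noncomputable def empMargInv (n d : ℕ) (X : Fin n → Fin d → ℝ) (j : Fin d) (u : ℝ) : EReal :=
  sInf (Real.toEReal '' {t : ℝ | u ≤ empMarg n d X j t})

open scoped Classical in
/-- The empirical copula `ℂₙ(u) = 𝔽ₙ(𝔽_{n1}⁻(u₁), …, 𝔽_{nd}⁻(u_d))`. -/
noncomputable def empCopula (n d : ℕ) (X : Fin n → Fin d → ℝ) (u : Fin d → ℝ) : ℝ :=
  (1 / n) * ∑ i : Fin n, ∏ j : Fin d,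
    if (X i j : EReal) ≤ empMargInv n d X j (u j) then (1 : ℝ) else 0

/-- The rank `R_{ij} = #{k : X_{kj} ≤ X_{ij}}`. -/
noncomputable def empRank (n d : ℕ) (X : Fin n → Fin d → ℝ) (i : Fin n) (j : Fin d) : ℕ :=
  (Finset.univ.filter fun k : Fin n => X k j ≤ X i j).card

open scoped Classical in
/-- The rank-based empirical copula `C̃ₙ(u) = (1/n) Σᵢ ∏ⱼ 𝟙{R_{ij}/n ≤ uⱼ}`. -/
noncomputable def rankCopula (n d : ℕ) (X : Fin n → Fin d → ℝ) (u : Fin d → ℝ) : ℝ :=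
  (1 / n) * ∑ i : Fin n, ∏ j : Fin d,
    if (empRank n d X i j : ℝ) / n ≤ u j then (1 : ℝ) else 0

section auxForProof

open scoped Classical

lemma empMarg_eq (n d : ℕ) (X : Fin n → Fin d → ℝ) (j : Fin d) (t : ℝ) :
    empMarg n d X j t = ((Finset.univ.filter fun k : Fin n => X k j ≤ t).card : ℝ) / n := by
  rw [empMarg, Finset.sum_boole, one_div, inv_mul_eq_div]

lemma empMarg_self (n d : ℕ) (X : Fin n → Fin d → ℝ) (i : Fin n) (j : Fin d) :
    empMarg n d X j (X i j) = (empRank n d X i j : ℝ) / n := by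
  rw [empMarg_eq, empRank]

lemma le_empMargInv (n d : ℕ) (hn : 0 < n) (X : Fin n → Fin d → ℝ)
    {i : Fin n} {j : Fin d} {v : ℝ}
    (h : (empRank n d X i j : ℝ) / n ≤ v) :
    (X i j : EReal) ≤ empMargInv n d X j v := by
  rw [empMargInv]
  apply le_sInf
  rintro e ⟨t, ht, rfl⟩
  simp only [Set.mem_setOf_eq] at ht
  rw [EReal.coe_le_coe_iff]
  by_contra hlt
  push_neg at hlt
  have hsub : (Finset.univ.filter fun k : Fin n => X k j ≤ t)
      ⊂ (Finset.univ.filter fun k : Fin n => X k j ≤ X i j) := by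
    constructor
    · intro k hk
      simp only [Finset.mem_filter, Finset.mem_univ, true_and] at *
      exact hk.trans hlt.le
    · intro hsup
      have := hsup (Finset.mem_filter.2 ⟨Finset.mem_univ i, le_rfl⟩)
      simp only [Finset.mem_filter] at this
      exact absurd this.2 (not_le.2 hlt)
  have hcard := Finset.card_lt_card hsub
  have hlt2 : empMarg n d X j t < (empRank n d X i j : ℝ) / n := by
    rw [empMarg_eq, empRank]
    apply div_lt_div_of_pos_right _ (by exact_mod_cast hn)
    exact_mod_cast hcard
  linarith

lemma empMargInv_le (n d : ℕ) (X : Fin n → Fin d → ℝ)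
    {i : Fin n} {j : Fin d} {v : ℝ}
    (h : v ≤ (empRank n d X i j : ℝ) / n) :
    empMargInv n d X j v ≤ (X i j : EReal) := by
  apply sInf_le
  exact ⟨X i j, by rw [Set.mem_setOf_eq, empMarg_self]; exact h, rfl⟩

lemma prod_sub_prod_le_sum_sub {d : ℕ} (a b : Fin d → ℝ)
    (ha : ∀ j, a j = 0 ∨ a j = 1) (hb : ∀ j, b j = 0 ∨ b j = 1)
    (hab : ∀ j, a j ≤ b j) :
    ∏ j, b j - ∏ j, a j ≤ ∑ j, (b j - a j) := by
  by_cases h : ∀ j, a j = 1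
  · have hb1 : ∀ j, b j = 1 := fun j => by
      rcases hb j with h0 | h1
      · exfalso; have := hab j; rw [h j, h0] at this; linarith
      · exact h1
    have e1 : ∏ j, a j = 1 := Finset.prod_eq_one fun j _ => h j
    have e2 : ∏ j, b j = 1 := Finset.prod_eq_one fun j _ => hb1 j
    have e3 : ∑ j, (b j - a j) = 0 := Finset.sum_eq_zero fun j _ => by
      rw [h j, hb1 j]; ring
    rw [e1, e2, e3]; norm_num
  · push_neg at h
    obtain ⟨j0, hj0⟩ := h
    have ha0 : a j0 = 0 := (ha j0).resolve_right hj0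
    have hpa : ∏ j, a j = 0 := Finset.prod_eq_zero (Finset.mem_univ j0) ha0
    have hnn : ∀ j, (0:ℝ) ≤ b j := fun j => by rcases hb j with h|h <;> simp [h]
    have hle1 : ∀ j, b j ≤ 1 := fun j => by rcases hb j with h|h <;> simp [h]
    have hpb : ∏ j, b j ≤ b j0 := by
      rw [← Finset.mul_prod_erase Finset.univ b (Finset.mem_univ j0)]
      have h1 : ∏ j ∈ Finset.univ.erase j0, b j ≤ 1 :=
        Finset.prod_le_one (fun j _ => hnn j) (fun j _ => hle1 j)
      calc b j0 * ∏ j ∈ Finset.univ.erase j0, b j ≤ b j0 * 1 :=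
            mul_le_mul_of_nonneg_left h1 (hnn j0)
        _ = b j0 := mul_one _
    have hsingle : b j0 - a j0 ≤ ∑ j, (b j - a j) :=
      Finset.single_le_sum (fun j _ => sub_nonneg.2 (hab j)) (Finset.mem_univ j0)
    rw [hpa, ha0] at *
    linarith

end auxForProof

/-- In the absence of ties, `sup_{u ∈ [0,1]^d} |C̃ₙ(u) − ℂₙ(u)| ≤ d / n`. -/
theorem rankCopula_sub_empCopula_le (n d : ℕ) (hn : 0 < n)
    (X : Fin n → Fin d → ℝ)
    (hties : ∀ j : Fin d, Function.Injective fun i : Fin n => X i j)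
    (u : Fin d → ℝ) (hu : ∀ j, u j ∈ Set.Icc (0 : ℝ) 1) :
    |rankCopula n d X u - empCopula n d X u| ≤ (d : ℝ) / n := by
  classical
  have hn' : (0:ℝ) < n := by exact_mod_cast hn
  set a : Fin n → Fin d → ℝ :=
    fun i j => if (empRank n d X i j : ℝ) / n ≤ u j then 1 else 0 with ha
  set b : Fin n → Fin d → ℝ :=
    fun i j => if (X i j : EReal) ≤ empMargInv n d X j (u j) then 1 else 0 with hb
  have ha01 : ∀ i j, a i j = 0 ∨ a i j = 1 := by
    intro i j; simp only [ha]; split <;> simp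
  have hb01 : ∀ i j, b i j = 0 ∨ b i j = 1 := by
    intro i j; simp only [hb]; split <;> simp
  have hab : ∀ i j, a i j ≤ b i j := by
    intro i j
    simp only [ha, hb]
    by_cases h1 : (empRank n d X i j : ℝ) / n ≤ u j
    · rw [if_pos h1, if_pos (le_empMargInv n d hn X h1)]
    · rw [if_neg h1]
      split <;> norm_num
  have key : ∀ j, ∑ i, (b i j - a i j) ≤ 1 := by
    intro j
    have hrepr : ∀ i, b i j - a i j =
        if ((X i j : EReal) ≤ empMargInv n d X j (u j) ∧
            ¬ ((empRank n d X i j : ℝ) / n ≤ u j)) then (1:ℝ) else 0 := by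
      intro i
      simp only [ha, hb]
      by_cases h1 : (empRank n d X i j : ℝ) / n ≤ u j
      · rw [if_pos h1, if_pos (le_empMargInv n d hn X h1),
          if_neg (by tauto)]
        ring
      · by_cases h2 : (X i j : EReal) ≤ empMargInv n d X j (u j)
        · rw [if_pos h2, if_neg h1, if_pos ⟨h2, h1⟩]; ring
        · rw [if_neg h2, if_neg h1, if_neg (by tauto)]; ring
    rw [Finset.sum_congr rfl (fun i _ => hrepr i), Finset.sum_boole]
    have hcard : (Finset.univ.filter fun i : Fin n =>
        ((X i j : EReal) ≤ empMargInv n d X j (u j) ∧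
          ¬ ((empRank n d X i j : ℝ) / n ≤ u j))).card ≤ 1 := by
      rw [Finset.card_le_one]
      intro i1 h1 i2 h2
      simp only [Finset.mem_filter, Finset.mem_univ, true_and] at h1 h2
      obtain ⟨hb1, ha1⟩ := h1
      obtain ⟨hb2, ha2⟩ := h2
      have l1 : empMargInv n d X j (u j) ≤ (X i1 j : EReal) :=
        empMargInv_le n d X (le_of_lt (lt_of_not_ge ha1))
      have l2 : empMargInv n d X j (u j) ≤ (X i2 j : EReal) :=
        empMargInv_le n d X (le_of_lt (lt_of_not_ge ha2))
      have e1 : (X i1 j : EReal) = (X i2 j : EReal) :=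
        (le_antisymm hb1 l1).trans (le_antisymm hb2 l2).symm
      exact hties j (EReal.coe_eq_coe_iff.1 e1)
    exact_mod_cast hcard
  have prodle : ∀ i, ∏ j, b i j - ∏ j, a i j ≤ ∑ j, (b i j - a i j) :=
    fun i => prod_sub_prod_le_sum_sub (a i) (b i) (ha01 i) (hb01 i) (hab i)
  have sum_le : ∑ i, (∏ j, b i j - ∏ j, a i j) ≤ (d:ℝ) := by
    calc ∑ i, (∏ j, b i j - ∏ j, a i j)
        ≤ ∑ i, ∑ j, (b i j - a i j) := Finset.sum_le_sum fun i _ => prodle i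
      _ = ∑ j, ∑ i, (b i j - a i j) := Finset.sum_comm
      _ ≤ ∑ _j : Fin d, (1:ℝ) := Finset.sum_le_sum fun j _ => key j
      _ = (d:ℝ) := by simp
  have hR : rankCopula n d X u = 1/(n:ℝ) * ∑ i, ∏ j, a i j := rfl
  have hE : empCopula n d X u = 1/(n:ℝ) * ∑ i, ∏ j, b i j := rfl
  have hle : rankCopula n d X u ≤ empCopula n d X u := by
    rw [hR, hE]
    apply mul_le_mul_of_nonneg_left _ (by positivity)
    apply Finset.sum_le_sum
    intro i _
    apply Finset.prod_le_prod
    · intro j _; rcases ha01 i j with h|h <;> simp [h]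
    · intro j _; exact hab i j
  rw [abs_sub_comm, abs_of_nonneg (sub_nonneg.2 hle), hR, hE, ← mul_sub,
    ← Finset.sum_sub_distrib]
  calc 1/(n:ℝ) * ∑ i, (∏ j, b i j - ∏ j, a i j)
      ≤ 1/(n:ℝ) * (d:ℝ) := mul_le_mul_of_nonneg_left sum_le (by positivity)
    _ = (d:ℝ) / n := by ring
end

section
/- The empirical beta copula is a genuine copula: it has uniform margins, i.e., for each j and each uⱼ ∈ [0,1], setting all other coordinates to 1 gives ℂₙ^β(1,…,1,uⱼ,1,…,1) = uⱼ, provided the ranks (R_{i1},…,R_{id}), i = 1,…,n, are such that for each j, (R_{1j},…,R_{nj}) is a permutation of (1,…,n). -/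
/-- `F_{n,r}(u) = Σ_{s=r}^{n} C(n,s) u^s (1−u)^{n−s}`, the CDF of the Beta(r, n+1−r)
distribution evaluated at `u`. -/
noncomputable def betaCDF (n r : ℕ) (u : ℝ) : ℝ :=
  ∑ s ∈ Finset.Icc r n, (n.choose s : ℝ) * u ^ s * (1 - u) ^ (n - s)

/-- The empirical beta copula `ℂₙ^β(u) = (1/n) Σᵢ ∏ⱼ F_{n,R_{ij}}(uⱼ)`. -/
noncomputable def empBetaCopula (n d : ℕ) (R : Fin n → Fin d → ℕ) (u : Fin d → ℝ) : ℝ :=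
  (1 / n) * ∑ i : Fin n, ∏ j : Fin d, betaCDF n (R i j) (u j)

lemma betaCDF_one (n r : ℕ) (hr : r ≤ n) : betaCDF n r 1 = 1 := by
  unfold betaCDF
  rw [Finset.sum_eq_single n]
  · simp
  · intro s hs hne
    have : n - s ≠ 0 := by simp at hs; omega
    simp [this]
  · intro h
    exact absurd (Finset.mem_Icc.2 ⟨hr, le_refl n⟩) h

lemma sum_betaCDF (n : ℕ) (hn : 1 ≤ n) (u : ℝ) :
    ∑ r ∈ Finset.Icc 1 n, betaCDF n r u = n * u := by
  unfold betaCDF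
  rw [Finset.sum_comm' (t' := Finset.Icc 1 n) (s' := fun s => Finset.Icc 1 s)
    (by intro x y; simp only [Finset.mem_Icc]; omega)]
  have hconst : ∀ s ∈ Finset.Icc 1 n,
      (∑ _r ∈ Finset.Icc 1 s, (n.choose s : ℝ) * u ^ s * (1 - u) ^ (n - s))
      = (s : ℝ) * ((n.choose s : ℝ) * u ^ s * (1 - u) ^ (n - s)) := by
    intro s _
    rw [Finset.sum_const, Nat.card_Icc]
    simp
  rw [Finset.sum_congr rfl hconst]
  have key : ∀ s ∈ Finset.Icc 1 n,
      (s : ℝ) * ((n.choose s : ℝ) * u ^ s * (1 - u) ^ (n - s))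
      = (n : ℝ) * (((n-1).choose (s-1) : ℝ) * u ^ s * (1 - u) ^ (n - s)) := by
    intro s hs
    simp only [Finset.mem_Icc] at hs
    obtain ⟨t, rfl⟩ : ∃ t, s = t + 1 := ⟨s - 1, by omega⟩
    obtain ⟨m, rfl⟩ : ∃ m, n = m + 1 := ⟨n - 1, by omega⟩
    have hc : (t + 1) * ((m + 1).choose (t + 1)) = (m + 1) * (m.choose t) := by
      rw [mul_comm]
      simpa [Nat.succ_eq_add_one] using (Nat.add_one_mul_choose_eq m t).symm
    have hc' : ((t : ℝ) + 1) * (((m + 1).choose (t + 1)) : ℝ)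
        = ((m : ℝ) + 1) * ((m.choose t) : ℝ) := by exact_mod_cast hc
    have e1 : m + 1 - 1 = m := by omega
    have e2 : t + 1 - 1 = t := by omega
    have e3 : m + 1 - (t + 1) = m - t := by omega
    rw [e1, e2, e3]
    push_cast
    linear_combination hc' * (u ^ (t + 1) * (1 - u) ^ (m - t))
  rw [Finset.sum_congr rfl key, ← Finset.mul_sum]
  congr 1
  have hmap : Finset.Icc 1 n
      = Finset.map ⟨fun t => t + 1, add_left_injective 1⟩ (Finset.range n) := by
    ext x
    simp only [Finset.mem_Icc, Finset.mem_map, Finset.mem_range, Function.Embedding.coeFn_mk]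
    constructor
    · rintro ⟨h1, h2⟩; exact ⟨x - 1, by omega, by omega⟩
    · rintro ⟨a, ha, rfl⟩; omega
  rw [hmap, Finset.sum_map]
  simp only [Function.Embedding.coeFn_mk]
  have : ∀ t ∈ Finset.range n,
      (((n-1).choose (t + 1 - 1) : ℝ)) * u ^ (t + 1) * (1 - u) ^ (n - (t + 1))
      = u * (((n-1).choose t : ℝ) * u ^ t * (1 - u) ^ ((n-1) - t)) := by
    intro t ht
    simp only [Finset.mem_range] at ht
    have h1 : t + 1 - 1 = t := by omega
    have h2 : n - (t + 1) = (n - 1) - t := by omega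
    rw [h1, h2, pow_add]
    ring
  rw [Finset.sum_congr rfl this, ← Finset.mul_sum]
  have hb : (∑ t ∈ Finset.range n, ((n-1).choose t : ℝ) * u ^ t * (1 - u) ^ ((n-1) - t)) = 1 := by
    have h := add_pow u (1 - u) (n - 1)
    simp only [add_sub_cancel, one_pow] at h
    have hr : n = (n - 1) + 1 := by omega
    rw [hr]
    calc ∑ t ∈ Finset.range ((n-1) + 1), ((n-1).choose t : ℝ) * u ^ t * (1 - u) ^ ((n-1) - t)
        = ∑ t ∈ Finset.range ((n-1) + 1), u ^ t * (1 - u) ^ ((n-1) - t) * ((n-1).choose t : ℝ) := by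
          apply Finset.sum_congr rfl; intro t _; ring
      _ = 1 := by rw [← h]
  rw [hb, mul_one]

/-- The empirical beta copula has uniform margins: if for each `j` the ranks
`(R_{1j},…,R_{nj})` form a permutation of `(1,…,n)`, then for each coordinate `j₀` and
each `u ∈ [0,1]`, setting all other coordinates to `1` gives `ℂₙ^β(1,…,1,u,1,…,1) = u`. -/
theorem empBetaCopula_margins (n d : ℕ) (hn : 1 ≤ n) (R : Fin n → Fin d → ℕ)
    (hmem : ∀ i j, R i j ∈ Finset.Icc 1 n)
    (hperm : ∀ j : Fin d, Function.Injective fun i : Fin n => R i j)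
    (j₀ : Fin d) (u : ℝ) (hu : u ∈ Set.Icc (0 : ℝ) 1) :
    empBetaCopula n d R (fun j => if j = j₀ then u else 1) = u := by
  unfold empBetaCopula
  have hprod : ∀ i : Fin n,
      (∏ j : Fin d, betaCDF n (R i j) (if j = j₀ then u else 1)) = betaCDF n (R i j₀) u := by
    intro i
    rw [Finset.prod_eq_single j₀]
    · simp
    · intro j _ hj
      simp only [if_neg hj]
      exact betaCDF_one n (R i j) (Finset.mem_Icc.1 (hmem i j)).2
    · simp
  rw [Finset.sum_congr rfl (fun i _ => hprod i)]
  have himg : Finset.image (fun i : Fin n => R i j₀) Finset.univ = Finset.Icc 1 n := by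
    apply Finset.eq_of_subset_of_card_le
    · intro r hr
      simp only [Finset.mem_image] at hr
      obtain ⟨i, _, rfl⟩ := hr
      exact hmem i j₀
    · rw [Finset.card_image_of_injective _ (hperm j₀)]
      simp
  have hsum : ∑ i : Fin n, betaCDF n (R i j₀) u = ∑ r ∈ Finset.Icc 1 n, betaCDF n r u := by
    rw [← himg, Finset.sum_image (fun i _ i' _ h => hperm j₀ h)]
  rw [hsum, sum_betaCDF n hn u]
  have hn' : (n : ℝ) ≠ 0 := by positivity
  field_simp
end

section
/- The bootstrapped empirical copula and the bootstrapped rank-based empirical copula differ by at most (d/n)·max_i W_{ni} in supremum norm: sup_{u∈[0,1]^d} |ℂₙ*(u) − C̃ₙ*(u)| ≤ (d/n) max_{1≤i≤n} W_{ni}. -/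
open Set Finset

open scoped Classical in
/-- The bootstrapped marginal empirical distribution function
`𝔽_{nj}*(x) = (1/n) Σᵢ W_{ni} 𝟙{X_{ij} ≤ x}`. -/
noncomputable def bootMarg (n d : ℕ) (W : Fin n → ℕ) (X : Fin n → Fin d → ℝ)
    (j : Fin d) (x : ℝ) : ℝ :=
  (1 / n) * ∑ i : Fin n, (W i : ℝ) * (if X i j ≤ x then (1 : ℝ) else 0)

/-- The generalized inverse `𝔽_{nj}*⁻(u) = inf {t : 𝔽_{nj}*(t) ≥ u}`, with the infimum
taken in the extended reals (so that it is `-∞` when the set is unbounded below). -/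
noncomputable def bootMargInv (n d : ℕ) (W : Fin n → ℕ) (X : Fin n → Fin d → ℝ)
    (j : Fin d) (u : ℝ) : EReal :=
  sInf (Real.toEReal '' {t : ℝ | u ≤ bootMarg n d W X j t})

open scoped Classical in
/-- The bootstrapped empirical copula `ℂₙ*(u) = 𝔽ₙ*(𝔽_{n1}*⁻(u₁),…,𝔽_{nd}*⁻(u_d))`. -/
noncomputable def bootEmpCopula (n d : ℕ) (W : Fin n → ℕ) (X : Fin n → Fin d → ℝ)
    (u : Fin d → ℝ) : ℝ :=
  (1 / n) * ∑ i : Fin n, (W i : ℝ) * ∏ j : Fin d,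
    if (X i j : EReal) ≤ bootMargInv n d W X j (u j) then (1 : ℝ) else 0

open scoped Classical in
/-- The bootstrapped rank `R*_{ij} = Σₖ W_{nk} 𝟙{X_{kj} ≤ X_{ij}}`. -/
noncomputable def bootRank (n d : ℕ) (W : Fin n → ℕ) (X : Fin n → Fin d → ℝ)
    (i : Fin n) (j : Fin d) : ℕ :=
  ∑ k : Fin n, W k * (if X k j ≤ X i j then 1 else 0)

open scoped Classical in
/-- The bootstrapped rank-based empirical copula
`C̃ₙ*(u) = (1/n) Σᵢ W_{ni} ∏ⱼ 𝟙{R*_{ij}/n ≤ uⱼ}`. -/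
noncomputable def bootRankCopula (n d : ℕ) (W : Fin n → ℕ) (X : Fin n → Fin d → ℝ)
    (u : Fin d → ℝ) : ℝ :=
  (1 / n) * ∑ i : Fin n, (W i : ℝ) * ∏ j : Fin d,
    if (bootRank n d W X i j : ℝ) / n ≤ u j then (1 : ℝ) else 0

open scoped Classical

lemma bootMarg_mono (n d : ℕ) (W : Fin n → ℕ) (X : Fin n → Fin d → ℝ) (j : Fin d)
    {s t : ℝ} (h : s ≤ t) : bootMarg n d W X j s ≤ bootMarg n d W X j t := by
  unfold bootMarg
  apply mul_le_mul_of_nonneg_left _ (by positivity)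
  apply Finset.sum_le_sum
  intro i _
  apply mul_le_mul_of_nonneg_left _ (Nat.cast_nonneg _)
  by_cases h1 : X i j ≤ s
  · simp [h1, h1.trans h]
  · by_cases h2 : X i j ≤ t <;> simp [h1, h2]

lemma bootMarg_self (n d : ℕ) (W : Fin n → ℕ) (X : Fin n → Fin d → ℝ)
    (i : Fin n) (j : Fin d) :
    bootMarg n d W X j (X i j) = (bootRank n d W X i j : ℝ) / n := by
  unfold bootMarg bootRank
  push_cast
  ring

lemma bootMarg_strict (n d : ℕ) (W : Fin n → ℕ) (X : Fin n → Fin d → ℝ) (j : Fin d)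
    {a b : Fin n} (h : X a j < X b j) :
    bootMarg n d W X j (X a j) + (W b : ℝ) / n ≤ bootMarg n d W X j (X b j) := by
  have hS : (∑ k : Fin n, (W k : ℝ) * (if X k j ≤ X a j then (1:ℝ) else 0)) + (W b : ℝ)
      ≤ ∑ k : Fin n, (W k : ℝ) * (if X k j ≤ X b j then (1:ℝ) else 0) := by
    have hWb : (W b : ℝ) = ∑ k : Fin n, if k = b then (W b : ℝ) else 0 := by simp
    rw [hWb, ← Finset.sum_add_distrib]
    apply Finset.sum_le_sum
    intro k _
    by_cases hk : k = b
    · subst hk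
      simp [not_le.mpr h]
    · simp only [hk, if_false, add_zero]
      apply mul_le_mul_of_nonneg_left _ (Nat.cast_nonneg _)
      by_cases h1 : X k j ≤ X a j
      · simp [h1, h1.trans h.le]
      · by_cases h2 : X k j ≤ X b j <;> simp [h1, h2]
  unfold bootMarg
  have h0 : (0:ℝ) ≤ 1 / n := by positivity
  calc (1 / (n:ℝ)) * ∑ k : Fin n, (W k : ℝ) * (if X k j ≤ X a j then (1:ℝ) else 0) + (W b : ℝ)/n
      = (1 / (n:ℝ)) * ((∑ k : Fin n, (W k : ℝ) * (if X k j ≤ X a j then (1:ℝ) else 0)) + (W b:ℝ)) := by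
        ring
    _ ≤ (1 / (n:ℝ)) * ∑ k : Fin n, (W k : ℝ) * (if X k j ≤ X b j then (1:ℝ) else 0) :=
        mul_le_mul_of_nonneg_left hS h0

lemma le_bootMargInv_iff (n d : ℕ) (W : Fin n → ℕ) (X : Fin n → Fin d → ℝ)
    (j : Fin d) (u' x : ℝ) :
    ((x : EReal) ≤ bootMargInv n d W X j u') ↔
      ∀ t : ℝ, u' ≤ bootMarg n d W X j t → x ≤ t := by
  unfold bootMargInv
  rw [le_sInf_iff]
  constructor
  · intro h t ht
    have := h (t : EReal) ⟨t, ht, rfl⟩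
    exact_mod_cast this
  · rintro h b ⟨t, ht, rfl⟩
    exact_mod_cast h t ht

lemma key_sum_le (n d : ℕ) (hn : 0 < n) (W : Fin n → ℕ) (X : Fin n → Fin d → ℝ)
    (j : Fin d) (hinj : Function.Injective fun i : Fin n => X i j) (u' : ℝ) :
    ∑ i : Fin n, (W i : ℝ) *
      |(if (X i j : EReal) ≤ bootMargInv n d W X j u' then (1:ℝ) else 0) -
       (if (bootRank n d W X i j : ℝ) / n ≤ u' then (1:ℝ) else 0)|
      ≤ ((Finset.univ.sup W : ℕ) : ℝ) := by
  set A : Fin n → Prop := fun i => (X i j : EReal) ≤ bootMargInv n d W X j u' with hAdef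
  set B : Fin n → Prop := fun i => (bootRank n d W X i j : ℝ) / n ≤ u' with hBdef
  have hB : ∀ i, B i ↔ bootMarg n d W X j (X i j) ≤ u' := by
    intro i
    rw [hBdef]
    simp only
    rw [bootMarg_self]
  have hA : ∀ i, A i ↔ ∀ t : ℝ, u' ≤ bootMarg n d W X j t → X i j ≤ t := by
    intro i
    rw [hAdef]
    exact le_bootMargInv_iff n d W X j u' (X i j)
  have hC2 : ∀ i, ¬ A i → B i → bootMarg n d W X j (X i j) = u' := by
    intro i hAi hBi
    rw [hA] at hAi
    push_neg at hAi
    obtain ⟨t, ht, htx⟩ := hAi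
    have h1 : bootMarg n d W X j t ≤ bootMarg n d W X j (X i j) :=
      bootMarg_mono n d W X j htx.le
    have h2 := (hB i).mp hBi
    linarith
  have hcase : ∀ i, ¬ (A i ↔ B i) →
      (A i ∧ u' < bootMarg n d W X j (X i j)) ∨
      (¬ A i ∧ bootMarg n d W X j (X i j) = u') := by
    intro i hi
    by_cases hAi : A i
    · left
      refine ⟨hAi, ?_⟩
      have hnB : ¬ B i := fun hb => hi ⟨fun _ => hb, fun _ => hAi⟩
      rw [hB] at hnB
      exact not_le.mp hnB
    · right
      have hBi : B i := by
        by_contra hb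
        exact hi ⟨fun ha => absurd ha hAi, fun hb' => absurd hb' hb⟩
      exact ⟨hAi, hC2 i hAi hBi⟩
  have hmix : ∀ a b : Fin n, A a → u' < bootMarg n d W X j (X a j) →
      bootMarg n d W X j (X b j) = u' → False := by
    intro a b hAa hFa hFb
    have hxb : X a j ≤ X b j := (hA a).mp hAa (X b j) (le_of_eq hFb.symm)
    have : bootMarg n d W X j (X a j) ≤ bootMarg n d W X j (X b j) :=
      bootMarg_mono n d W X j hxb
    linarith
  have key : ∀ i₁ i₂ : Fin n, ¬(A i₁ ↔ B i₁) → ¬(A i₂ ↔ B i₂) →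
      W i₁ ≠ 0 → W i₂ ≠ 0 → i₁ = i₂ := by
    intro i₁ i₂ h₁ h₂ hw₁ hw₂
    rcases hcase i₁ h₁ with ⟨hA1, hF1⟩ | ⟨hA1, hF1⟩ <;>
      rcases hcase i₂ h₂ with ⟨hA2, hF2⟩ | ⟨hA2, hF2⟩
    · have h12 : X i₁ j ≤ X i₂ j := (hA i₁).mp hA1 (X i₂ j) hF2.le
      have h21 : X i₂ j ≤ X i₁ j := (hA i₂).mp hA2 (X i₁ j) hF1.le
      exact hinj (le_antisymm h12 h21)
    · exact (hmix i₁ i₂ hA1 hF1 hF2).elim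
    · exact (hmix i₂ i₁ hA2 hF2 hF1).elim
    · by_contra hne
      have hwpos : ∀ k : Fin n, W k ≠ 0 → (0:ℝ) < (W k : ℝ) / n := by
        intro k hk
        apply div_pos
        · exact_mod_cast Nat.pos_of_ne_zero hk
        · exact_mod_cast hn
      rcases lt_trichotomy (X i₁ j) (X i₂ j) with hlt | heq | hgt
      · have := bootMarg_strict n d W X j hlt
        have := hwpos i₂ hw₂
        linarith
      · exact hne (hinj heq)
      · have := bootMarg_strict n d W X j hgt
        have := hwpos i₁ hw₁
        linarith
  set D : Finset (Fin n) :=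
    Finset.univ.filter (fun i : Fin n => ¬ (A i ↔ B i) ∧ W i ≠ 0) with hDdef
  have hcard : D.card ≤ 1 := by
    rw [Finset.card_le_one]
    intro a ha b hb
    rw [hDdef, Finset.mem_filter] at ha hb
    exact key a b ha.2.1 hb.2.1 ha.2.2 hb.2.2
  have hsum_eq : ∑ i : Fin n, (W i : ℝ) *
      |(if A i then (1:ℝ) else 0) - (if B i then (1:ℝ) else 0)|
      = ∑ i ∈ D, (W i : ℝ) *
      |(if A i then (1:ℝ) else 0) - (if B i then (1:ℝ) else 0)| := by
    symm
    apply Finset.sum_subset (Finset.subset_univ D)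
    intro i _ hi
    rw [hDdef, Finset.mem_filter] at hi
    by_cases hiff : A i ↔ B i
    · have : (if A i then (1:ℝ) else 0) = (if B i then (1:ℝ) else 0) :=
        if_congr hiff rfl rfl
      rw [this, sub_self, abs_zero, mul_zero]
    · have hw0 : W i = 0 := by
        by_contra hw
        exact hi ⟨Finset.mem_univ i, hiff, hw⟩
      rw [hw0]
      simp
  rw [hsum_eq]
  have hterm : ∀ i ∈ D, (W i : ℝ) *
      |(if A i then (1:ℝ) else 0) - (if B i then (1:ℝ) else 0)|
      ≤ ((Finset.univ.sup W : ℕ) : ℝ) := by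
    intro i _
    have habs : |(if A i then (1:ℝ) else 0) - (if B i then (1:ℝ) else 0)| ≤ 1 := by
      split_ifs <;> norm_num
    have hWle : (W i : ℝ) ≤ ((Finset.univ.sup W : ℕ) : ℝ) := by
      exact_mod_cast Finset.le_sup (Finset.mem_univ i)
    calc (W i : ℝ) * |(if A i then (1:ℝ) else 0) - (if B i then (1:ℝ) else 0)|
        ≤ (W i : ℝ) * 1 := mul_le_mul_of_nonneg_left habs (Nat.cast_nonneg _)
      _ = (W i : ℝ) := mul_one _
      _ ≤ _ := hWle
  calc ∑ i ∈ D, (W i : ℝ) *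
        |(if A i then (1:ℝ) else 0) - (if B i then (1:ℝ) else 0)|
      ≤ ∑ _i ∈ D, ((Finset.univ.sup W : ℕ) : ℝ) := Finset.sum_le_sum hterm
    _ = D.card * ((Finset.univ.sup W : ℕ) : ℝ) := by
        rw [Finset.sum_const, nsmul_eq_mul]
    _ ≤ 1 * ((Finset.univ.sup W : ℕ) : ℝ) := by
        apply mul_le_mul_of_nonneg_right _ (Nat.cast_nonneg _)
        exact_mod_cast hcard
    _ = _ := one_mul _

lemma abs_prod_sub_prod_le (d : ℕ) (a b : Fin d → ℝ)
    (ha : ∀ j, a j = 0 ∨ a j = 1) (hb : ∀ j, b j = 0 ∨ b j = 1) :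
    |(∏ j : Fin d, a j) - ∏ j : Fin d, b j| ≤ ∑ j : Fin d, |a j - b j| := by
  by_cases h : ∀ j, a j = b j
  · have : (∏ j : Fin d, a j) = ∏ j : Fin d, b j :=
      Finset.prod_congr rfl (fun j _ => h j)
    rw [this, sub_self, abs_zero]
    exact Finset.sum_nonneg fun j _ => abs_nonneg _
  · push_neg at h
    obtain ⟨j0, hj0⟩ := h
    have h1 : |a j0 - b j0| = 1 := by
      rcases ha j0 with h'|h' <;> rcases hb j0 with h''|h'' <;>
        rw [h', h''] at hj0 ⊢ <;> simp_all
    have hbound : ∀ c : Fin d → ℝ, (∀ j, c j = 0 ∨ c j = 1) →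
        0 ≤ (∏ j : Fin d, c j) ∧ (∏ j : Fin d, c j) ≤ 1 := by
      intro c hc
      constructor
      · exact Finset.prod_nonneg fun j _ => by rcases hc j with h'|h' <;> simp [h']
      · exact Finset.prod_le_one (fun j _ => by rcases hc j with h'|h' <;> simp [h'])
          (fun j _ => by rcases hc j with h'|h' <;> simp [h'])
    obtain ⟨ha0, ha1⟩ := hbound a ha
    obtain ⟨hb0, hb1⟩ := hbound b hb
    calc |(∏ j : Fin d, a j) - ∏ j : Fin d, b j| ≤ 1 := by
          rw [abs_sub_le_iff]; constructor <;> linarith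
      _ = |a j0 - b j0| := h1.symm
      _ ≤ ∑ j : Fin d, |a j - b j| :=
          Finset.single_le_sum (f := fun j => |a j - b j|)
            (fun j _ => abs_nonneg _) (Finset.mem_univ j0)

/-- `sup_{u ∈ [0,1]^d} |ℂₙ*(u) − C̃ₙ*(u)| ≤ (d/n) · max_{1≤i≤n} W_{ni}`. -/
theorem bootEmpCopula_sub_bootRankCopula_le (n d : ℕ) (hn : 0 < n)
    (W : Fin n → ℕ) (hW : ∑ i : Fin n, W i = n)
    (X : Fin n → Fin d → ℝ)
    (hties : ∀ j : Fin d, Function.Injective fun i : Fin n => X i j)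
    (u : Fin d → ℝ) (hu : ∀ j, u j ∈ Set.Icc (0 : ℝ) 1) :
    |bootEmpCopula n d W X u - bootRankCopula n d W X u|
      ≤ ((d : ℝ) / n) * ((Finset.univ.sup W : ℕ) : ℝ) := by
  have h0n : (0:ℝ) ≤ 1 / (n:ℝ) := by positivity
  have step1 : |bootEmpCopula n d W X u - bootRankCopula n d W X u|
      ≤ (1 / (n:ℝ)) * ∑ i : Fin n, (W i : ℝ) *
        |(∏ j : Fin d, if (X i j : EReal) ≤ bootMargInv n d W X j (u j) then (1:ℝ) else 0)
          - ∏ j : Fin d, if (bootRank n d W X i j : ℝ) / n ≤ u j then (1:ℝ) else 0| := by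
    unfold bootEmpCopula bootRankCopula
    rw [← mul_sub, ← Finset.sum_sub_distrib, abs_mul, abs_of_nonneg h0n]
    apply mul_le_mul_of_nonneg_left _ h0n
    refine (Finset.abs_sum_le_sum_abs _ _).trans ?_
    apply Finset.sum_le_sum
    intro i _
    rw [← mul_sub, abs_mul, Nat.abs_cast]
  have step2 : ∀ i : Fin n,
      |(∏ j : Fin d, if (X i j : EReal) ≤ bootMargInv n d W X j (u j) then (1:ℝ) else 0)
        - ∏ j : Fin d, if (bootRank n d W X i j : ℝ) / n ≤ u j then (1:ℝ) else 0|
      ≤ ∑ j : Fin d,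
        |(if (X i j : EReal) ≤ bootMargInv n d W X j (u j) then (1:ℝ) else 0)
          - (if (bootRank n d W X i j : ℝ) / n ≤ u j then (1:ℝ) else 0)| := by
    intro i
    apply abs_prod_sub_prod_le
    · intro j; split_ifs <;> simp
    · intro j; split_ifs <;> simp
  calc |bootEmpCopula n d W X u - bootRankCopula n d W X u|
      ≤ (1 / (n:ℝ)) * ∑ i : Fin n, (W i : ℝ) *
        |(∏ j : Fin d, if (X i j : EReal) ≤ bootMargInv n d W X j (u j) then (1:ℝ) else 0)
          - ∏ j : Fin d, if (bootRank n d W X i j : ℝ) / n ≤ u j then (1:ℝ) else 0| := step1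
    _ ≤ (1 / (n:ℝ)) * ∑ i : Fin n, (W i : ℝ) * ∑ j : Fin d,
        |(if (X i j : EReal) ≤ bootMargInv n d W X j (u j) then (1:ℝ) else 0)
          - (if (bootRank n d W X i j : ℝ) / n ≤ u j then (1:ℝ) else 0)| := by
        apply mul_le_mul_of_nonneg_left _ h0n
        apply Finset.sum_le_sum
        intro i _
        exact mul_le_mul_of_nonneg_left (step2 i) (Nat.cast_nonneg _)
    _ = (1 / (n:ℝ)) * ∑ j : Fin d, ∑ i : Fin n, (W i : ℝ) *
        |(if (X i j : EReal) ≤ bootMargInv n d W X j (u j) then (1:ℝ) else 0)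
          - (if (bootRank n d W X i j : ℝ) / n ≤ u j then (1:ℝ) else 0)| := by
        congr 1
        rw [Finset.sum_comm]
        apply Finset.sum_congr rfl
        intro i _
        rw [Finset.mul_sum]
    _ ≤ (1 / (n:ℝ)) * ∑ _j : Fin d, ((Finset.univ.sup W : ℕ) : ℝ) := by
        apply mul_le_mul_of_nonneg_left _ h0n
        apply Finset.sum_le_sum
        intro j _
        exact key_sum_le n d hn W X j (hties j) (u j)
    _ = ((d : ℝ) / n) * ((Finset.univ.sup W : ℕ) : ℝ) := by
        rw [Finset.sum_const, Finset.card_univ, Fintype.card_fin, nsmul_eq_mul]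
        ring
end
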